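/- arXiv:1810.12472 — 6 statements merged into one kernel-verified Lean document; each statement's English description precedes it below -/
import Mathlib

section
/- The Ehrhart counting function of the rational triangle P with vertices (5,-1), (-1,-1), (-1,1/2) satisfies L_P(k) = |kP ∩ ℤ²| = (9/2)k² + (9/2)k + 1 for all nonnegative integers k, so it is a polynomial even though P is not a lattice polytope. -/
open Pointwise

lemma P_eq : convexHull ℚ {((5 : ℚ), (-1 : ℚ)), (-1, -1), (-1, 1/2)} =
    {q : ℚ × ℚ | -1 ≤ q.1 ∧ -1 ≤ q.2 ∧ q.1 + 4 * q.2 ≤ 1} := by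
  apply le_antisymm
  · apply convexHull_min
    · rintro q (rfl | rfl | rfl) <;> norm_num
    · rintro x hx y hy a b ha hb hab
      simp only [Set.mem_setOf_eq] at *
      obtain ⟨hx1, hx2, hx3⟩ := hx
      obtain ⟨hy1, hy2, hy3⟩ := hy
      refine ⟨?_, ?_, ?_⟩ <;> simp only [Prod.fst_add, Prod.snd_add, Prod.smul_fst,
        Prod.smul_snd, smul_eq_mul] <;> nlinarith [mul_le_mul_of_nonneg_left hx1 ha,
        mul_le_mul_of_nonneg_left hy1 hb, mul_le_mul_of_nonneg_left hx2 ha,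
        mul_le_mul_of_nonneg_left hy2 hb, mul_le_mul_of_nonneg_left hx3 ha,
        mul_le_mul_of_nonneg_left hy3 hb]
  · rintro q ⟨h1, h2, h3⟩
    set a : ℚ := (q.1 + 1) / 6 with ha_def
    set c : ℚ := (q.2 + 1) * 2 / 3 with hc_def
    set b : ℚ := 1 - a - c with hb_def
    have hw : ∀ i ∈ (Finset.univ : Finset (Fin 3)), 0 ≤ ![a, b, c] i := by
      intro i _
      fin_cases i <;> simp [ha_def, hb_def, hc_def] <;> linarith
    have hsum : ∑ i : Fin 3, ![a, b, c] i = 1 := by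
      simp [Fin.sum_univ_three, hb_def]; ring
    have hmem := Finset.centerMass_mem_convexHull (Finset.univ : Finset (Fin 3)) hw
      (by rw [hsum]; norm_num)
      (z := ![((5 : ℚ), (-1 : ℚ)), (-1, -1), (-1, 1/2)])
      (s := {((5 : ℚ), (-1 : ℚ)), (-1, -1), (-1, 1/2)})
      (by intro i _; fin_cases i <;> simp)
    rw [Finset.centerMass_eq_of_sum_1 _ _ hsum, Fin.sum_univ_three] at hmem
    have heq : (a • ((5:ℚ),(-1:ℚ)) + b • ((-1:ℚ),(-1:ℚ)) + c • ((-1:ℚ),(1/2:ℚ)) : ℚ × ℚ) = q := by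
      have hq : q = (q.1, q.2) := rfl
      rw [hq]
      simp only [Prod.smul_mk, smul_eq_mul, Prod.mk_add_mk, Prod.mk.injEq]
      constructor <;> (simp only [ha_def, hb_def, hc_def]; ring)
    simp only [Matrix.cons_val_zero, Matrix.cons_val_one, Matrix.head_cons,
      Matrix.cons_val_two, Matrix.tail_cons, heq] at hmem
    exact hmem

lemma mem_iff (k : ℕ) (x y : ℤ) :
    ((x : ℚ), (y : ℚ)) ∈ (k : ℚ) • convexHull ℚ {((5 : ℚ), (-1 : ℚ)), (-1, -1), (-1, 1/2)} ↔
      (-(k : ℤ) ≤ x ∧ -(k : ℤ) ≤ y ∧ x + 4 * y ≤ (k : ℤ)) := by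
  rcases Nat.eq_zero_or_pos k with rfl | hk
  · have hne : ({((5 : ℚ), (-1 : ℚ)), (-1, -1), (-1, 1/2)} : Set (ℚ × ℚ)).Nonempty :=
      ⟨(5, -1), by left; rfl⟩
    rw [Nat.cast_zero, Set.zero_smul_set (hne.mono (subset_convexHull ℚ _))]
    simp only [Set.mem_zero, Prod.mk_eq_zero, Nat.cast_zero]
    constructor
    · rintro ⟨h1, h2⟩
      have : x = 0 := by exact_mod_cast h1
      have : y = 0 := by exact_mod_cast h2
      omega
    · rintro ⟨h1, h2, h3⟩
      constructor <;> [skip; skip] <;> norm_cast <;> omega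
  · have hkpos : (0 : ℚ) < k := by exact_mod_cast hk
    have hk' : (k : ℚ) ≠ 0 := ne_of_gt hkpos
    rw [Set.mem_smul_set_iff_inv_smul_mem₀ hk', P_eq]
    simp only [Set.mem_setOf_eq, Prod.smul_fst, Prod.smul_snd, smul_eq_mul, inv_mul_eq_div]
    have e1 : ((-1 : ℚ) ≤ (x : ℚ) / k) ↔ -(k : ℚ) ≤ (x : ℚ) := by
      rw [le_div_iff₀ hkpos]; constructor <;> intro h <;> linarith
    have e2 : ((-1 : ℚ) ≤ (y : ℚ) / k) ↔ -(k : ℚ) ≤ (y : ℚ) := by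
      rw [le_div_iff₀ hkpos]; constructor <;> intro h <;> linarith
    have e3 : ((x : ℚ) / k + 4 * ((y : ℚ) / k) ≤ 1) ↔ (x : ℚ) + 4 * (y : ℚ) ≤ (k : ℚ) := by
      rw [show (x : ℚ) / k + 4 * ((y : ℚ) / k) = ((x : ℚ) + 4 * y) / k by ring,
        div_le_one hkpos]
    rw [e1, e2, e3]
    constructor
    · rintro ⟨h1, h2, h3⟩
      refine ⟨by exact_mod_cast h1, by exact_mod_cast h2, by exact_mod_cast h3⟩
    · rintro ⟨h1, h2, h3⟩
      refine ⟨by exact_mod_cast h1, by exact_mod_cast h2, by exact_mod_cast h3⟩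

lemma gauss (K : ℤ) (n : ℕ) :
    ∑ y ∈ Finset.Icc (-K) (-K + n), (2 * (K : ℚ) - 4 * y + 1) =
      ((n : ℚ) + 1) * (6 * K + 1) - 2 * n * (n + 1) := by
  induction n with
  | zero => simp; ring
  | succ n ih =>
    rw [show (-K + (n + 1 : ℕ) : ℤ) = (-K + n) + 1 by push_cast; ring,
      show Finset.Icc (-K) ((-K + n) + 1) = insert ((-K + n) + 1) (Finset.Icc (-K) (-K + n)) by
        ext x; simp; omega,
      Finset.sum_insert (by simp; omega), ih]
    push_cast
    ring

/-- The Ehrhart counting function of the rational triangle with vertices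
(5,-1), (-1,-1), (-1,1/2) is the polynomial (9/2)k² + (9/2)k + 1. -/
theorem stmt0 :
    let P : Set (ℚ × ℚ) := convexHull ℚ {((5 : ℚ), (-1 : ℚ)), (-1, -1), (-1, 1/2)}
    ∀ k : ℕ,
      (Set.ncard {p : ℤ × ℤ | ((p.1 : ℚ), (p.2 : ℚ)) ∈ (k : ℚ) • P} : ℚ) =
        9/2 * k ^ 2 + 9/2 * k + 1 := by
  intro P k
  classical
  have hset : {p : ℤ × ℤ | ((p.1 : ℚ), (p.2 : ℚ)) ∈ (k : ℚ) • P} =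
      ↑((Finset.Icc (-(k:ℤ)) (5 * k) ×ˢ Finset.Icc (-(k:ℤ)) k).filter
        (fun p => p.1 + 4 * p.2 ≤ (k:ℤ))) := by
    ext ⟨x, y⟩
    simp only [Set.mem_setOf_eq, Finset.coe_filter, Finset.mem_product,
      Finset.mem_Icc, Finset.mem_coe, Finset.mem_filter]
    rw [mem_iff k x y]
    constructor
    · rintro ⟨h1, h2, h3⟩
      refine ⟨⟨⟨h1, ?_⟩, h2, ?_⟩, h3⟩ <;> omega
    · rintro ⟨⟨⟨h1, _⟩, h2, _⟩, h3⟩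
      exact ⟨h1, h2, h3⟩
  rw [hset, Set.ncard_coe_finset]
  have hcardN : ((Finset.Icc (-(k:ℤ)) (5 * k) ×ˢ Finset.Icc (-(k:ℤ)) k).filter
        (fun p => p.1 + 4 * p.2 ≤ (k:ℤ))).card =
      ∑ y ∈ Finset.Icc (-(k:ℤ)) k,
        ((Finset.Icc (-(k:ℤ)) (5 * k)).filter (fun x => x + 4 * y ≤ (k:ℤ))).card := by
    rw [Finset.card_filter,
      Finset.sum_product_right' (Finset.Icc (-(k:ℤ)) (5 * k)) (Finset.Icc (-(k:ℤ)) k)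
        (fun x y => if x + 4 * y ≤ (k:ℤ) then 1 else 0)]
    exact Finset.sum_congr rfl fun y _ => (Finset.card_filter _ _).symm
  rw [hcardN]
  push_cast only [Nat.cast_sum]
  have hinner : ∀ y ∈ Finset.Icc (-(k:ℤ)) k,
      ((((Finset.Icc (-(k:ℤ)) (5 * k)).filter (fun x => x + 4 * y ≤ (k:ℤ))).card : ℕ) : ℚ) =
        if y ≤ (k:ℤ) / 2 then 2 * ((k:ℤ) : ℚ) - 4 * y + 1 else 0 := by
    intro y hy
    simp only [Finset.mem_Icc] at hy
    by_cases h : y ≤ (k:ℤ) / 2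
    · rw [if_pos h]
      have he : (Finset.Icc (-(k:ℤ)) (5 * k)).filter (fun x => x + 4 * y ≤ (k:ℤ)) =
          Finset.Icc (-(k:ℤ)) ((k:ℤ) - 4 * y) := by
        ext x; simp only [Finset.mem_filter, Finset.mem_Icc]; omega
      have hnn : (0 : ℤ) ≤ (k:ℤ) - 4 * y + 1 - -(k:ℤ) := by omega
      have h2 : ((((k:ℤ) - 4 * y + 1 - -(k:ℤ)).toNat : ℕ) : ℚ) =
          (((k:ℤ) - 4 * y + 1 - -(k:ℤ) : ℤ) : ℚ) := by
        exact_mod_cast congrArg (Int.cast : ℤ → ℚ) (Int.toNat_of_nonneg hnn)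
      rw [he, Int.card_Icc, h2]
      push_cast
      ring
    · rw [if_neg h]
      have he : (Finset.Icc (-(k:ℤ)) (5 * k)).filter (fun x => x + 4 * y ≤ (k:ℤ)) = ∅ := by
        ext x; simp only [Finset.mem_filter, Finset.mem_Icc, Finset.notMem_empty,
          iff_false, not_and]
        omega
      rw [he]
      simp
  rw [Finset.sum_congr rfl hinner, ← Finset.sum_filter]
  have hfil : (Finset.Icc (-(k:ℤ)) k).filter (fun y => y ≤ (k:ℤ) / 2) =
      Finset.Icc (-(k:ℤ)) (-(k:ℤ) + (k + k / 2 : ℕ)) := by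
    ext y; simp only [Finset.mem_filter, Finset.mem_Icc]; omega
  rw [hfil, gauss]
  rcases Nat.even_or_odd k with ⟨t, ht⟩ | ⟨t, ht⟩
  · rw [ht, show t + t + (t + t) / 2 = 3 * t from by omega]
    push_cast
    ring
  · rw [ht, show 2 * t + 1 + (2 * t + 1) / 2 = 3 * t + 1 from by omega]
    push_cast
    ring
end

section
/- The rational triangle with vertices (5,-1), (-1,-1), (-1,1/2) and the lattice triangle with vertices (2,-1), (-1,-1), (-1,2) have the same number of lattice points in every nonnegative integer dilate. -/
/-!
Both triangles are right triangles with the right angle at `(-1, -1)`, so the lattice points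
of the `k`-th dilates are `{x, y ≥ -k, x + 4y ≤ k}` and `{x, y ≥ -k, x + y ≤ k}`.
Row `y` of the first set has `2k - 4y + 1` points; cutting it after its first `k - 2y + 1`
points and sliding the rest produces exactly the rows `2y + k` and `2y + k + 1` of the second.
-/

open Pointwise

section ConvexHull

variable {𝕜 : Type*} [Field 𝕜] [LinearOrder 𝕜] [IsStrictOrderedRing 𝕜]

theorem convexHull_rightTriangle (p q : 𝕜) {a b : 𝕜} (ha : 0 < a) (hb : 0 < b) :
    convexHull 𝕜 {(p + a, q), (p, q), (p, q + b)} =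
      {z : 𝕜 × 𝕜 | p ≤ z.1 ∧ q ≤ z.2 ∧ b * (z.1 - p) + a * (z.2 - q) ≤ a * b} := by
  apply subset_antisymm
  · refine convexHull_min ?_ ?_
    · rintro z (rfl | rfl | rfl) <;> simp [ha.le, hb.le, mul_comm, (mul_pos ha hb).le]
    · rintro ⟨x₁, x₂⟩ ⟨hx₁, hx₂, hx⟩ ⟨y₁, y₂⟩ ⟨hy₁, hy₂, hy⟩ s t hs ht hst
      obtain rfl : t = 1 - s := by linarith
      simp only [Set.mem_ofPred_eq, Prod.smul_mk, Prod.mk_add_mk, smul_eq_mul]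
      refine ⟨?_, ?_, ?_⟩ <;> nlinarith
  · rintro ⟨x, y⟩ ⟨hx, hy, hxy⟩
    set s := (x - p) / a
    set t := (y - q) / b
    have hs : 0 ≤ s := div_nonneg (by linarith) ha.le
    have ht : 0 ≤ t := div_nonneg (by linarith) hb.le
    have hst : s + t ≤ 1 := by
      rw [div_add_div _ _ ha.ne' hb.ne', div_le_one (by positivity)]
      linarith
    have hcombo : ∑ i, ![s, 1 - s - t, t] i • ![(p + a, q), (p, q), (p, q + b)] i = (x, y) := by
      simp only [Fin.sum_univ_three]
      ext <;> simp [s, t] <;> field_simp <;> ring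
    rw [← hcombo]
    refine (convex_convexHull 𝕜 _).sum_mem ?_ (by simp [Fin.sum_univ_three]; ring) ?_
    · simp [Fin.forall_fin_succ, hs, ht]
      linarith
    · intro i _
      apply subset_convexHull
      fin_cases i <;> simp

theorem smul_convexHull_triangle {b c : 𝕜} (hb : 0 < b) (hc : 0 < c) :
    c • convexHull 𝕜 {(1 + b, -1), (-1, -1), (-1, 2 / b)} =
      {z : 𝕜 × 𝕜 | -c ≤ z.1 ∧ -c ≤ z.2 ∧ z.1 + b * z.2 ≤ c} := by
  have hvert : c • ({(1 + b, -1), (-1, -1), (-1, 2 / b)} : Set (𝕜 × 𝕜)) =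
      {(-c + (2 + b) * c, -c), (-c, -c), (-c, -c + (2 + b) * c / b)} := by
    simp only [Set.smul_set_insert, Set.smul_set_singleton, Prod.smul_mk, smul_eq_mul]
    refine congrArg₂ _ ?_ (congrArg₂ _ ?_ (congrArg _ ?_)) <;> ext <;> field_simp <;> ring
  rw [← convexHull_smul, hvert, convexHull_rightTriangle _ _ (by positivity) (by positivity)]
  ext z
  refine and_congr_right' (and_congr_right' ?_)
  have hr : 0 < (2 + b) * c / b := by positivity
  rw [show (2 + b) * c / b * (z.1 - -c) + (2 + b) * c * (z.2 - -c)
      = (2 + b) * c / b * (z.1 + b * z.2 + (1 + b) * c) by field_simp; ring,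
    show (2 + b) * c * ((2 + b) * c / b) = (2 + b) * c / b * ((2 + b) * c) by ring,
    mul_le_mul_iff_right₀ hr]
  constructor <;> intro <;> linarith

end ConvexHull

def latticeTriangle (b k : ℤ) : Set (ℤ × ℤ) := {p | -k ≤ p.1 ∧ -k ≤ p.2 ∧ p.1 + b * p.2 ≤ k}

theorem latticePoints_smul_triangle {b : ℤ} (hb : 0 < b) {k : ℕ} (hk : 0 < k) :
    {p : ℤ × ℤ | ((p.1 : ℚ), (p.2 : ℚ)) ∈
      (k : ℚ) • convexHull ℚ {(1 + (b : ℚ), -1), (-1, -1), (-1, 2 / (b : ℚ))}} =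
      latticeTriangle b k := by
  rw [smul_convexHull_triangle (by exact_mod_cast hb) (by exact_mod_cast hk)]
  ext p
  simp only [Set.mem_ofPred_eq, latticeTriangle]
  norm_cast

theorem ncard_latticeTriangle_four (k : ℤ) :
    (latticeTriangle 4 k).ncard = (latticeTriangle 1 k).ncard := by
  refine Set.ncard_congr (fun p _ => if p.1 + 2 * p.2 ≤ 0 then (p.1, 2 * p.2 + k)
    else (p.1 + 2 * p.2 - k - 1, 2 * p.2 + k + 1)) ?_ ?_ ?_
  · rintro ⟨x, y⟩ ⟨hx, hy, hxy⟩
    dsimp only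
    split_ifs <;> simp only [latticeTriangle, Set.mem_ofPred_eq] <;> omega
  · rintro ⟨x, y⟩ ⟨x', y'⟩ - - h
    dsimp only at h
    split_ifs at h <;> simp only [Prod.mk.injEq] at h <;> ext <;> omega
  · rintro ⟨x, y⟩ ⟨hx, hy, hxy⟩
    obtain ⟨m, hm | hm⟩ := Int.even_or_odd' (y - k)
    · refine ⟨(x, m), ⟨by omega, by omega, by omega⟩, ?_⟩
      dsimp only
      rw [if_pos (by omega), Prod.mk.injEq]
      omega
    · refine ⟨(x - y + 2 * k + 2, m), ⟨by omega, by omega, by omega⟩, ?_⟩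
      dsimp only
      rw [if_neg (by omega), Prod.mk.injEq]
      omega

/-- The rational triangle conv{(5,-1),(-1,-1),(-1,1/2)} and the lattice triangle
conv{(2,-1),(-1,-1),(-1,2)} have the same number of lattice points in every
nonnegative integer dilate. -/
theorem stmt2 :
    let P : Set (ℚ × ℚ) := convexHull ℚ {((5 : ℚ), (-1 : ℚ)), (-1, -1), (-1, 1/2)}
    let Q : Set (ℚ × ℚ) := convexHull ℚ {((2 : ℚ), (-1 : ℚ)), (-1, -1), (-1, 2)}
    ∀ k : ℕ,
      Set.ncard {p : ℤ × ℤ | ((p.1 : ℚ), (p.2 : ℚ)) ∈ (k : ℚ) • P} =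
        Set.ncard {p : ℤ × ℤ | ((p.1 : ℚ), (p.2 : ℚ)) ∈ (k : ℚ) • Q} := by
  intro P Q k
  rcases k.eq_zero_or_pos with rfl | hk
  · have hP : P.Nonempty := ⟨_, subset_convexHull _ _ (Set.mem_insert _ _)⟩
    have hQ : Q.Nonempty := ⟨_, subset_convexHull _ _ (Set.mem_insert _ _)⟩
    rw [Nat.cast_zero, Set.zero_smul_set hP, Set.zero_smul_set hQ]
  have hP : P = convexHull ℚ {(1 + ((4 : ℤ) : ℚ), -1), (-1, -1), (-1, 2 / ((4 : ℤ) : ℚ))} := by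
    norm_num [P]
  have hQ : Q = convexHull ℚ {(1 + ((1 : ℤ) : ℚ), -1), (-1, -1), (-1, 2 / ((1 : ℤ) : ℚ))} := by
    norm_num [Q]
  rw [hP, hQ, latticePoints_smul_triangle four_pos hk, latticePoints_smul_triangle one_pos hk]
  exact ncard_latticeTriangle_four k
end

section
/- The piecewise-linear map φ(u₁,u₂) = (u₁,u₂) for u₁+2u₂ ≤ 0 and (3u₁+4u₂, −u₁−u₂) otherwise maps the triangle with vertices (2,−1), (−1,−1), (−1,2) bijectively onto the triangle with vertices (5,−1), (−1,−1), (−1,1/2). -/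
/-- A point written as a convex combination of three points lies in their hull. -/
lemma mem_tri (a b c p : ℚ × ℚ) (x y z : ℚ) (hx : 0 ≤ x) (hy : 0 ≤ y)
    (hz : 0 ≤ z) (hs : x + y + z = 1) (hp : p = x • a + y • b + z • c) :
    p ∈ convexHull ℚ ({a, b, c} : Set (ℚ × ℚ)) := by
  have key := (convex_convexHull ℚ ({a, b, c} : Set (ℚ × ℚ))).sum_mem
    (t := (Finset.univ : Finset (Fin 3))) (w := ![x, y, z]) (z := ![a, b, c])
    (fun i _ => by fin_cases i <;> simpa)
    (by simp [Fin.sum_univ_three]; linarith)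
    (fun i _ => by
      fin_cases i <;>
        exact subset_convexHull ℚ ({a, b, c} : Set (ℚ × ℚ)) (by simp))
  rw [Fin.sum_univ_three] at key
  simpa [hp] using key

/-- Half-plane description of a triangle with two axis edges. -/
lemma convex_half (α β : ℚ) :
    Convex ℚ {p : ℚ × ℚ | -1 ≤ p.1 ∧ -1 ≤ p.2 ∧ α * p.1 + β * p.2 ≤ 1} := by
  rintro p ⟨hp1, hp2, hp3⟩ q ⟨hq1, hq2, hq3⟩ s t hs ht hst
  refine ⟨?_, ?_, ?_⟩ <;> simp only [Prod.fst_add, Prod.snd_add, Prod.smul_fst,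
    Prod.smul_snd, smul_eq_mul] <;> nlinarith

lemma Qhull_eq : convexHull ℚ ({((2 : ℚ), (-1 : ℚ)), (-1, -1), (-1, 2)} : Set (ℚ × ℚ))
    = {p : ℚ × ℚ | -1 ≤ p.1 ∧ -1 ≤ p.2 ∧ 1 * p.1 + 1 * p.2 ≤ 1} := by
  apply le_antisymm
  · apply convexHull_min _ (convex_half 1 1)
    rintro p (rfl | rfl | rfl) <;> norm_num
  · rintro ⟨u, v⟩ ⟨h1, h2, h3⟩
    exact mem_tri _ _ _ _ ((u + 1) / 3) ((1 - u - v) / 3) ((v + 1) / 3)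
      (by linarith) (by linarith) (by linarith) (by ring)
      (by simp [Prod.ext_iff, Prod.smul_fst]; constructor <;> ring)

lemma Phull_eq : convexHull ℚ ({((5 : ℚ), (-1 : ℚ)), (-1, -1), (-1, 1/2)} : Set (ℚ × ℚ))
    = {p : ℚ × ℚ | -1 ≤ p.1 ∧ -1 ≤ p.2 ∧ 1 * p.1 + 4 * p.2 ≤ 1} := by
  apply le_antisymm
  · apply convexHull_min _ (convex_half 1 4)
    rintro p (rfl | rfl | rfl) <;> norm_num
  · rintro ⟨u, v⟩ ⟨h1, h2, h3⟩
    exact mem_tri _ _ _ _ ((u + 1) / 6) ((1 - u - 4 * v) / 6) (2 * (v + 1) / 3)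
      (by linarith) (by linarith) (by linarith) (by ring)
      (by simp [Prod.ext_iff, Prod.smul_fst]; constructor <;> ring)

/-- The piecewise-linear mutation map φ maps the lattice triangle
conv{(2,-1),(-1,-1),(-1,2)} bijectively onto the rational triangle
conv{(5,-1),(-1,-1),(-1,1/2)}. -/
theorem stmt4 :
    let φ : ℚ × ℚ → ℚ × ℚ := fun u =>
      if u.1 + 2 * u.2 ≤ 0 then u else (3 * u.1 + 4 * u.2, -u.1 - u.2)
    let Q : Set (ℚ × ℚ) := convexHull ℚ {((2 : ℚ), (-1 : ℚ)), (-1, -1), (-1, 2)}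
    let P : Set (ℚ × ℚ) := convexHull ℚ {((5 : ℚ), (-1 : ℚ)), (-1, -1), (-1, 1/2)}
    Set.BijOn φ Q P := by
  intro φ Q P
  set ψ : ℚ × ℚ → ℚ × ℚ := fun u =>
    if u.1 + 2 * u.2 ≤ 0 then u else (-u.1 - 4 * u.2, u.1 + 3 * u.2) with hψ
  have hQ : Q = {p : ℚ × ℚ | -1 ≤ p.1 ∧ -1 ≤ p.2 ∧ 1 * p.1 + 1 * p.2 ≤ 1} := Qhull_eq
  have hP : P = {p : ℚ × ℚ | -1 ≤ p.1 ∧ -1 ≤ p.2 ∧ 1 * p.1 + 4 * p.2 ≤ 1} := Phull_eq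
  have hinv : Set.InvOn ψ φ Q P := by
    constructor
    · intro ⟨u, v⟩ _
      by_cases h : u + 2 * v ≤ 0
      · simp [φ, ψ, h]
      · have h2 : ¬ (3 * u + 4 * v + 2 * (-u - v) ≤ 0) := by
          push_neg at h ⊢; linarith
        simp only [φ, ψ, if_neg h]
        simp only [if_neg h2]
        exact Prod.ext (by ring) (by ring)
    · intro ⟨u, v⟩ _
      by_cases h : u + 2 * v ≤ 0
      · simp [φ, ψ, h]
      · have h2 : ¬ (-u - 4 * v + 2 * (u + 3 * v) ≤ 0) := by
          push_neg at h ⊢; linarith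
        simp only [φ, ψ, if_neg h]
        simp only [if_neg h2]
        exact Prod.ext (by ring) (by ring)
  refine hinv.bijOn ?_ ?_
  · rintro ⟨u, v⟩ hu
    rw [hQ] at hu
    obtain ⟨h1, h2, h3⟩ := hu
    rw [hP]
    by_cases h : u + 2 * v ≤ 0
    · simp only [φ, if_pos h]
      exact ⟨h1, h2, by linarith⟩
    · push_neg at h
      simp only [φ, if_neg (not_le.mpr h)]
      exact ⟨by dsimp; linarith, by dsimp; linarith, by dsimp; linarith⟩
  · rintro ⟨u, v⟩ hu
    rw [hP] at hu
    obtain ⟨h1, h2, h3⟩ := hu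
    rw [hQ]
    by_cases h : u + 2 * v ≤ 0
    · simp only [ψ, if_pos h]
      exact ⟨h1, h2, by linarith⟩
    · push_neg at h
      simp only [ψ, if_neg (not_le.mpr h)]
      exact ⟨by dsimp; linarith, by dsimp; linarith, by dsimp; linarith⟩
end

section
/- Let (a,b,c) be a Markov triple with b̄ an inverse of b modulo a². Then gcd(a², c²b̄² + 1) = a, and consequently a²/gcd(a², c²b̄²+1) = a. -/
/-!
Since b is invertible modulo a², the Markov equation gives
b²(c²b̄² + 1) ≡ b² + c² = a(3bc − a) (mod a²). Both b and 3bc − a are prime to a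
(a is prime to b and c, and 3 ∤ a because squares mod 3 are 0 or 1), so a² and
c²b̄² + 1 share exactly one factor a.
-/

lemma Int.three_dvd_of_three_dvd_sq_add_sq {x y : ℤ} (h : 3 ∣ x ^ 2 + y ^ 2) : 3 ∣ x := by
  have hzmod := (ZMod.intCast_zmod_eq_zero_iff_dvd (x ^ 2 + y ^ 2) 3).mpr h
  refine (ZMod.intCast_zmod_eq_zero_iff_dvd x 3).mp ?_
  push_cast at hzmod
  generalize (x : ZMod 3) = s at hzmod ⊢
  generalize (y : ZMod 3) = t at hzmod
  revert s t
  decide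

lemma Int.isCoprime_of_mul_modEq_one {n b bb : ℤ} (h : b * bb ≡ 1 [ZMOD n]) :
    IsCoprime n b := by
  obtain ⟨m, hm⟩ := h.symm.dvd
  exact ⟨-m, bb, by linarith⟩

lemma Int.gcd_sq_eq_of_mul_modEq {a u v x : ℤ} (ha : 0 ≤ a) (hu : IsCoprime a u)
    (hv : IsCoprime a v) (hx : v * x ≡ a * u [ZMOD a ^ 2]) :
    (Int.gcd (a ^ 2) x : ℤ) = a := by
  have hsq : a ^ 2 ∣ a * u - v * x := hx.dvd
  have ha_dvd_x : a ∣ x := by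
    refine hv.dvd_of_dvd_mul_left ?_
    have := (dvd_pow_self a two_ne_zero).trans hsq
    simpa using dvd_sub (dvd_mul_right a u) this
  set g : ℤ := (Int.gcd (a ^ 2) x : ℤ)
  have hg_sq : g ∣ a ^ 2 := Int.gcd_dvd_left _ _
  have hg_au : g ∣ a * u := by
    simpa using dvd_add ((Int.gcd_dvd_right _ _).mul_left v) (hg_sq.trans hsq)
  have hg_u : IsCoprime g u := (hu.pow_left (m := 2)).of_isCoprime_of_dvd_left hg_sq
  exact Int.dvd_antisymm (Int.natCast_nonneg _) ha (hg_u.dvd_of_dvd_mul_right hg_au)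
    (Int.dvd_coe_gcd (dvd_pow_self a two_ne_zero) ha_dvd_x)

section Markov

variable {a b c : ℤ}

lemma markov_sq_add_sq (h : a ^ 2 + b ^ 2 + c ^ 2 = 3 * a * b * c) :
    b ^ 2 + c ^ 2 = a * (3 * b * c - a) := by
  linear_combination h

lemma markov_isCoprime_right (h : a ^ 2 + b ^ 2 + c ^ 2 = 3 * a * b * c)
    (hab : IsCoprime a b) : IsCoprime a c := by
  have hc2 : IsCoprime a (-(b ^ 2) + a * (3 * b * c - a)) :=
    (hab.pow_right (n := 2)).neg_right.add_mul_left_right _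
  rw [show -(b ^ 2) + a * (3 * b * c - a) = c ^ 2 by linear_combination -h] at hc2
  exact hc2.of_isCoprime_of_dvd_right (dvd_pow_self c two_ne_zero)

lemma markov_isCoprime_three (h : a ^ 2 + b ^ 2 + c ^ 2 = 3 * a * b * c)
    (hab : IsCoprime a b) : IsCoprime a 3 := by
  refine ((Prime.coprime_iff_not_dvd Int.prime_three).mpr fun h3a => ?_).symm
  have h3b : 3 ∣ b := Int.three_dvd_of_three_dvd_sq_add_sq (y := c) <| by
    rw [markov_sq_add_sq h]
    exact h3a.mul_right _
  exact Int.prime_three.not_isUnit (hab.isUnit_of_dvd' h3a h3b)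

lemma markov_isCoprime_three_mul_sub (h : a ^ 2 + b ^ 2 + c ^ 2 = 3 * a * b * c)
    (hab : IsCoprime a b) : IsCoprime a (3 * b * c - a) := by
  have h3bc : IsCoprime a (3 * b * c) :=
    ((markov_isCoprime_three h hab).mul_right hab).mul_right (markov_isCoprime_right h hab)
  simpa [sub_eq_add_neg] using h3bc.add_mul_left_right (-1)

lemma markov_mul_modEq {bb : ℤ} (h : a ^ 2 + b ^ 2 + c ^ 2 = 3 * a * b * c)
    (hbb : b * bb ≡ 1 [ZMOD a ^ 2]) :
    b ^ 2 * (c ^ 2 * bb ^ 2 + 1) ≡ a * (3 * b * c - a) [ZMOD a ^ 2] := by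
  have hsq : b ^ 2 * bb ^ 2 ≡ 1 [ZMOD a ^ 2] := by simpa [mul_pow] using hbb.pow 2
  calc b ^ 2 * (c ^ 2 * bb ^ 2 + 1) = c ^ 2 * (b ^ 2 * bb ^ 2) + b ^ 2 := by ring
    _ ≡ c ^ 2 * 1 + b ^ 2 [ZMOD a ^ 2] := (hsq.mul_left _).add_right _
    _ = a * (3 * b * c - a) := by linear_combination h

end Markov

theorem stmt8_general (a b c bb : ℤ) (ha : 0 < a)
    (h : a ^ 2 + b ^ 2 + c ^ 2 = 3 * a * b * c)
    (hbb : b * bb ≡ 1 [ZMOD a ^ 2]) :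
    (Int.gcd (a ^ 2) (c ^ 2 * bb ^ 2 + 1) : ℤ) = a ∧
      a ^ 2 / (Int.gcd (a ^ 2) (c ^ 2 * bb ^ 2 + 1) : ℤ) = a := by
  have hab : IsCoprime a b := (Int.isCoprime_of_mul_modEq_one hbb).of_isCoprime_of_dvd_left
    (dvd_pow_self a two_ne_zero)
  have hgcd : (Int.gcd (a ^ 2) (c ^ 2 * bb ^ 2 + 1) : ℤ) = a :=
    Int.gcd_sq_eq_of_mul_modEq ha.le (markov_isCoprime_three_mul_sub h hab)
      (hab.pow_right (n := 2)) (markov_mul_modEq h hbb)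
  refine ⟨hgcd, ?_⟩
  rw [hgcd, sq, Int.mul_ediv_cancel a ha.ne']

/-- For a Markov triple (a,b,c) and b̄ an inverse of b modulo a²,
gcd(a², c²b̄² + 1) = a, and hence a²/gcd(a², c²b̄² + 1) = a. -/
theorem stmt8 (a b c bb : ℤ) (ha : 0 < a) (hb : 0 < b) (hc : 0 < c)
    (h : a ^ 2 + b ^ 2 + c ^ 2 = 3 * a * b * c)
    (hbb : b * bb ≡ 1 [ZMOD a ^ 2]) :
    (Int.gcd (a ^ 2) (c ^ 2 * bb ^ 2 + 1) : ℤ) = a ∧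
      a ^ 2 / (Int.gcd (a ^ 2) (c ^ 2 * bb ^ 2 + 1) : ℤ) = a :=
  stmt8_general a b c bb ha h hbb
end

section
/- A cyclic quotient singularity 1/r(1,a) with r > 0, 0 ≤ a < r is a T-singularity (i.e. r = dn² and a = dnc−1 for some positive integers d,n,c with gcd(n,c)=1) if and only if its local index ℓ = r/gcd(r,a+1) divides its width k = gcd(r,a+1). -/
/-- A cyclic quotient singularity 1/r(1,a) is a T-singularity (r = dn²,
a = dnc - 1 with gcd(n,c) = 1) if and only if its local index
ℓ = r/gcd(r,a+1) divides its width k = gcd(r,a+1). -/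
theorem stmt15 (r a : ℕ) (hr : 0 < r) (ha : a < r) :
    (∃ d n c : ℕ, 0 < d ∧ 0 < n ∧ 0 < c ∧ Nat.Coprime n c ∧
        r = d * n ^ 2 ∧ a + 1 = d * n * c) ↔
      (r / Nat.gcd r (a + 1)) ∣ Nat.gcd r (a + 1) := by
  constructor
  · rintro ⟨d, n, c, hd, hn, hc, hnc, hra, hac⟩
    have hg : Nat.gcd r (a + 1) = d * n := by
      rw [hra, hac, pow_two, ← mul_assoc, Nat.gcd_mul_left, hnc, mul_one]
    rw [hg, hra, pow_two, ← mul_assoc, Nat.mul_div_cancel_left _ (by positivity)]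
    exact dvd_mul_left n d
  · intro hdvd
    set g := Nat.gcd r (a + 1) with hg
    have hg0 : 0 < g := Nat.gcd_pos_of_pos_left _ hr
    have hgr : g ∣ r := Nat.gcd_dvd_left _ _
    have hga : g ∣ a + 1 := Nat.gcd_dvd_right _ _
    obtain ⟨d, hd⟩ := hdvd
    set ℓ := r / g with hℓ
    have hℓ0 : 0 < ℓ := Nat.div_pos (Nat.le_of_dvd hr hgr) hg0
    have hd0 : 0 < d := by
      rcases Nat.eq_zero_or_pos d with h | h
      · simp [h] at hd; omega
      · exact h
    refine ⟨d, ℓ, (a + 1) / g, hd0, hℓ0, Nat.div_pos (Nat.le_of_dvd (by omega) hga) hg0,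
      Nat.coprime_div_gcd_div_gcd hg0, ?_, ?_⟩
    · rw [show d * ℓ ^ 2 = g * ℓ from by rw [hd]; ring, Nat.mul_div_cancel' hgr]
    · rw [show d * ℓ * ((a + 1) / g) = g * ((a + 1) / g) from by rw [hd]; ring,
        Nat.mul_div_cancel' hga]
end

section
/- The triangle P with vertices (3,2), (−1,2), (−1,−2) has dual polygon P* with denominator 2 (2P* is a lattice polygon but P* is not), and the Ehrhart quasi-polynomial of P* is the honest polynomial L_{P*}(k) = k² + k + 1. -/
open Pointwise

/-- A set in ℚ² is a lattice polytope if it is the convex hull of finitely many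
integer points. -/
def IsLatticePolytope (A : Set (ℚ × ℚ)) : Prop :=
  ∃ S : Finset (ℤ × ℤ), A = convexHull ℚ ((fun p : ℤ × ℤ => ((p.1 : ℚ), (p.2 : ℚ))) '' ↑S)

/-!
Testing the polar condition on the vertices of `P` shows that `P*` is the triangle
`3x + 2y ≥ -1, -x + 2y ≥ -1, -x - 2y ≥ -1` with vertices `(1, 0)`, `(-1, 1)`, `(0, -1/2)`.
Hence `2P*` is a lattice triangle, while `P*` is not: all its lattice points satisfy `y ≥ 0`.
The lattice points of `(k + 1)P*` outside `kP*` are those on its boundary; parametrizing the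
three edges gives `(k + 2) + ⌊(k + 1)/2⌋ + ⌊k/2⌋ = 2k + 2` of them, and summing over `k`
gives `k² + k + 1`.
-/

theorem smul_add_smul_add_smul_mem_convexHull {𝕜 E : Type*} [Field 𝕜] [LinearOrder 𝕜]
    [IsStrictOrderedRing 𝕜] [AddCommGroup E] [Module 𝕜 E] {s : Set E} {x y z : E}
    (hx : x ∈ s) (hy : y ∈ s) (hz : z ∈ s) {a b c : 𝕜} (ha : 0 ≤ a) (hb : 0 ≤ b) (hc : 0 ≤ c)
    (habc : a + b + c = 1) : a • x + b • y + c • z ∈ convexHull 𝕜 s := by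
  have := (convex_convexHull 𝕜 s).sum_mem (t := Finset.univ) (w := ![a, b, c]) (z := ![x, y, z])
    (by simp [Fin.forall_fin_succ, ha, hb, hc]) (by simpa [Fin.sum_univ_three] using habc)
    (by simp [Fin.forall_fin_succ, subset_convexHull 𝕜 s hx, subset_convexHull 𝕜 s hy,
      subset_convexHull 𝕜 s hz])
  simpa [Fin.sum_univ_three] using this

theorem IsLatticePolytope.subset_of_forall_intCast_mem {A C : Set (ℚ × ℚ)}
    (hA : IsLatticePolytope A) (hC : Convex ℚ C)
    (h : ∀ p : ℤ × ℤ, ((p.1 : ℚ), (p.2 : ℚ)) ∈ A → ((p.1 : ℚ), (p.2 : ℚ)) ∈ C) : A ⊆ C := by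
  obtain ⟨S, rfl⟩ := hA
  refine convexHull_min ?_ hC
  rintro _ ⟨p, hp, rfl⟩
  exact h p (subset_convexHull ℚ _ ⟨p, hp, rfl⟩)

/-- `r • P*`: the facet normals of `P*` are the vertices of `P`. -/
def dualTriangle (r : ℚ) : Set (ℚ × ℚ) :=
  {u | -r ≤ 3 * u.1 + 2 * u.2 ∧ -r ≤ -u.1 + 2 * u.2 ∧ -r ≤ -u.1 - 2 * u.2}

theorem convex_dualTriangle (r : ℚ) : Convex ℚ (dualTriangle r) := by
  have h (f : ℚ × ℚ →ₗ[ℚ] ℚ) := convex_halfSpace_ge f.isLinear (-r)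
  exact (h (3 • .fst ℚ ℚ ℚ + 2 • .snd ℚ ℚ ℚ)).inter
    ((h (-.fst ℚ ℚ ℚ + 2 • .snd ℚ ℚ ℚ)).inter (h (-.fst ℚ ℚ ℚ - 2 • .snd ℚ ℚ ℚ)))

theorem dual_eq_dualTriangle_one :
    {u : ℚ × ℚ | ∀ v ∈ convexHull ℚ {((3 : ℚ), (2 : ℚ)), (-1, 2), (-1, -2)},
      u.1 * v.1 + u.2 * v.2 ≥ -1} = dualTriangle 1 := by
  ext u
  have hconv : Convex ℚ {v : ℚ × ℚ | -1 ≤ u.1 * v.1 + u.2 * v.2} :=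
    convex_halfSpace_ge (u.1 • LinearMap.fst ℚ ℚ ℚ + u.2 • LinearMap.snd ℚ ℚ ℚ).isLinear _
  change convexHull ℚ _ ⊆ {v : ℚ × ℚ | -1 ≤ u.1 * v.1 + u.2 * v.2} ↔ _
  rw [hconv.convexHull_subset_iff]
  simp only [Set.insert_subset_iff, Set.singleton_subset_iff, Set.mem_ofPred_eq, dualTriangle]
  constructor <;> rintro ⟨h₁, h₂, h₃⟩ <;> refine ⟨?_, ?_, ?_⟩ <;> linarith

theorem dualTriangle_zero : dualTriangle 0 = {0} := by
  ext u
  simp only [dualTriangle, Set.mem_ofPred_eq, Set.mem_singleton_iff, Prod.ext_iff, Prod.fst_zero,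
    Prod.snd_zero]
  constructor
  · rintro ⟨h₁, h₂, h₃⟩
    constructor <;> linarith
  · rintro ⟨h₁, h₂⟩
    simp [h₁, h₂]

theorem smul_dualTriangle_one {r : ℚ} (hr : 0 ≤ r) : r • dualTriangle 1 = dualTriangle r := by
  rcases hr.eq_or_lt with rfl | hr
  · rw [dualTriangle_zero, Set.zero_smul_set ⟨0, by simp [dualTriangle]⟩]
    rfl
  ext u
  rw [Set.mem_smul_set_iff_inv_smul_mem₀ hr.ne']
  simp only [dualTriangle, Set.mem_ofPred_eq, Prod.smul_fst, Prod.smul_snd, smul_eq_mul]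
  have key (t : ℚ) : -1 ≤ r⁻¹ * t ↔ -r ≤ t := by rw [le_inv_mul_iff₀ hr, mul_neg_one]
  simp only [← key, mul_add, mul_sub, mul_neg, mul_left_comm r⁻¹]

theorem dualTriangle_two : dualTriangle 2 = convexHull ℚ {((0 : ℚ), (-1 : ℚ)), (-2, 2), (2, 0)} := by
  refine subset_antisymm ?_ (convexHull_min ?_ (convex_dualTriangle 2))
  · rintro u ⟨h₁, h₂, h₃⟩
    -- the barycentric weights are the slacks of the facet inequalities opposite each vertex
    have hu : u = ((2 - u.1 - 2 * u.2) / 4) • ((0 : ℚ), (-1 : ℚ)) +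
        ((2 - u.1 + 2 * u.2) / 8) • ((-2 : ℚ), (2 : ℚ)) +
        ((2 + 3 * u.1 + 2 * u.2) / 8) • ((2 : ℚ), (0 : ℚ)) := by
      ext <;> simp <;> ring
    rw [hu]
    apply smul_add_smul_add_smul_mem_convexHull (by simp) (by simp) (by simp) <;> linarith
  · simp only [Set.insert_subset_iff, Set.singleton_subset_iff]
    norm_num [dualTriangle]

theorem not_isLatticePolytope_dualTriangle_one : ¬ IsLatticePolytope (dualTriangle 1) := by
  intro h
  have hsub := h.subset_of_forall_intCast_mem
    (convex_halfSpace_ge (LinearMap.snd ℚ ℚ ℚ).isLinear 0) fun ⟨x, y⟩ ⟨h₁, h₂, _⟩ => by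
      -- `(3x + 2y) + 3(-x + 2y) = 8y`, so `y ≥ -1/2`
      have hy : ((-1 : ℤ) : ℚ) < y := by push_cast at h₁ h₂ ⊢; linarith
      have : (0 : ℤ) ≤ y := by have := Int.cast_lt.mp hy; omega
      exact Int.cast_nonneg (R := ℚ) this
  have := hsub (show ((0 : ℚ), (-1 / 2 : ℚ)) ∈ dualTriangle 1 by norm_num [dualTriangle])
  norm_num at this

noncomputable def latticeDualTriangle (k : ℕ) : Finset (ℤ × ℤ) :=
  (Finset.Icc (-(k : ℤ)) k ×ˢ Finset.Icc (-(k : ℤ)) k).filter fun p =>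
    -(k : ℤ) ≤ 3 * p.1 + 2 * p.2 ∧ -(k : ℤ) ≤ -p.1 + 2 * p.2 ∧ -(k : ℤ) ≤ -p.1 - 2 * p.2

theorem mem_latticeDualTriangle {k : ℕ} {p : ℤ × ℤ} :
    p ∈ latticeDualTriangle k ↔
      -(k : ℤ) ≤ 3 * p.1 + 2 * p.2 ∧ -(k : ℤ) ≤ -p.1 + 2 * p.2 ∧ -(k : ℤ) ≤ -p.1 - 2 * p.2 := by
  simp only [latticeDualTriangle, Finset.mem_filter, Finset.mem_product, Finset.mem_Icc]
  omega

/-- The lattice points on the edges `-x - 2y = -m`, `-x + 2y = -m` and `3x + 2y = -m` of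
`m • P*`, each vertex counted once. -/
noncomputable def dualTriangleLayer (m : ℤ) : Finset (ℤ × ℤ) :=
  (Finset.Icc 0 m).image (fun y => (m - 2 * y, y)) ∪
    (Finset.Icc (-(m / 2)) (-1)).image (fun y => (m + 2 * y, y)) ∪
    (Finset.Icc 1 ((m - 1) / 2)).image (fun j => (2 * j - m, m - 3 * j))

theorem dualTriangleLayer_eq_sdiff (k : ℕ) :
    dualTriangleLayer (k + 1) = latticeDualTriangle (k + 1) \ latticeDualTriangle k := by
  ext ⟨x, y⟩
  simp only [dualTriangleLayer, Finset.mem_union, Finset.mem_image, Finset.mem_Icc,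
    Finset.mem_sdiff, mem_latticeDualTriangle, Prod.mk.injEq]
  push_cast
  constructor
  · rintro ((⟨hy, rfl, -⟩ | ⟨hy, rfl, -⟩) | ⟨j, hj, rfl, rfl⟩) <;> omega
  · rintro ⟨⟨h₁, h₂, h₃⟩, hk⟩
    by_cases e₃ : -x - 2 * y = -(k + 1)
    · exact .inl (.inl ⟨by omega, by omega, rfl⟩)
    by_cases e₂ : -x + 2 * y = -(k + 1)
    · exact .inl (.inr ⟨by omega, by omega, rfl⟩)
    · exact .inr ⟨(x + k + 1) / 2, by omega, by omega, by omega⟩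

theorem card_dualTriangleLayer (k : ℕ) : (dualTriangleLayer (k + 1)).card = 2 * k + 2 := by
  rw [dualTriangleLayer, Finset.card_union_of_disjoint, Finset.card_union_of_disjoint,
    Finset.card_image_of_injective, Finset.card_image_of_injective,
    Finset.card_image_of_injective, Int.card_Icc, Int.card_Icc, Int.card_Icc]
  · omega
  · exact fun a b h => by simp only [Prod.mk.injEq] at h; omega
  · exact fun a b h => by simp only [Prod.mk.injEq] at h; omega
  · exact fun a b h => by simp only [Prod.mk.injEq] at h; omega
  · simp only [Finset.disjoint_left, Finset.mem_image, Finset.mem_Icc]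
    rintro _ ⟨a, ha, rfl⟩ ⟨b, hb, h⟩
    simp only [Prod.mk.injEq] at h
    omega
  · simp only [Finset.disjoint_left, Finset.mem_union, Finset.mem_image, Finset.mem_Icc]
    rintro _ (⟨a, ha, rfl⟩ | ⟨a, ha, rfl⟩) ⟨b, hb, h⟩ <;> simp only [Prod.mk.injEq] at h <;> omega

theorem latticeDualTriangle_subset_succ (k : ℕ) :
    latticeDualTriangle k ⊆ latticeDualTriangle (k + 1) := fun p hp => by
  rw [mem_latticeDualTriangle] at hp ⊢
  push_cast
  omega

theorem card_latticeDualTriangle (k : ℕ) : (latticeDualTriangle k).card = k ^ 2 + k + 1 := by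
  induction k with
  | zero =>
    suffices latticeDualTriangle 0 = {0} by simp [this]
    ext ⟨x, y⟩
    simp only [mem_latticeDualTriangle, Finset.mem_singleton, Prod.mk_eq_zero]
    omega
  | succ k ih =>
    rw [← Finset.card_sdiff_add_card_eq_card (latticeDualTriangle_subset_succ k),
      ← dualTriangleLayer_eq_sdiff, card_dualTriangleLayer, ih]
    ring

theorem intCast_mem_dualTriangle_iff {k : ℕ} {p : ℤ × ℤ} :
    ((p.1 : ℚ), (p.2 : ℚ)) ∈ dualTriangle k ↔ p ∈ latticeDualTriangle k := by
  rw [mem_latticeDualTriangle]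
  simp only [dualTriangle, Set.mem_ofPred_eq]
  norm_cast

/-- The dual P* of the triangle P = conv{(3,2),(-1,2),(-1,-2)} has denominator
2 (2P* is a lattice polytope but P* is not), and its Ehrhart quasi-polynomial
is the honest polynomial k² + k + 1. -/
theorem stmt17 :
    let P : Set (ℚ × ℚ) := convexHull ℚ {((3 : ℚ), (2 : ℚ)), (-1, 2), (-1, -2)}
    let Pd : Set (ℚ × ℚ) := {u | ∀ v ∈ P, u.1 * v.1 + u.2 * v.2 ≥ -1}
    IsLatticePolytope ((2 : ℚ) • Pd) ∧ ¬ IsLatticePolytope Pd ∧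
      ∀ k : ℕ,
        (Set.ncard {p : ℤ × ℤ | ((p.1 : ℚ), (p.2 : ℚ)) ∈ (k : ℚ) • Pd} : ℚ) =
          k ^ 2 + k + 1 := by
  intro P Pd
  have hPd : Pd = dualTriangle 1 := dual_eq_dualTriangle_one
  refine ⟨?_, hPd ▸ not_isLatticePolytope_dualTriangle_one, fun k => ?_⟩
  · refine ⟨{(0, -1), (-2, 2), (2, 0)}, ?_⟩
    rw [hPd, smul_dualTriangle_one zero_le_two, dualTriangle_two]
    simp [Set.image_insert_eq]
  · have hpts : {p : ℤ × ℤ | ((p.1 : ℚ), (p.2 : ℚ)) ∈ (k : ℚ) • Pd} = latticeDualTriangle k := by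
      ext p
      rw [hPd, smul_dualTriangle_one k.cast_nonneg, Set.mem_ofPred_eq, intCast_mem_dualTriangle_iff,
        Finset.mem_coe]
    rw [hpts, Set.ncard_coe_finset, card_latticeDualTriangle]
    push_cast
    ring
end
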